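/- The D_n Weyl denominator formula holds: (1/2) · det_{1≤i,j≤n}(x_i^{j-1} + x_i^{2n-j-1}) = ∏_{1≤i<j≤n} (x_i - x_j)(x_i x_j - 1). -/

import Mathlib

/-!
For `k = n - 1 - j` the `(i, j)` entry is `x^j (x^(2k) + 1)`, and `x^(2k) + 1 = x^k D_k(x + 1/x)` is
the homogenised Dickson polynomial `D_k(a, b) = ∑ c_{k,m} a^m b^(k-m)` evaluated at
`(a, b) = (x^2 + 1, x)`. Hence the matrix factors as the projective Vandermonde matrix with rows
`x_i^m (x_i^2 + 1)^(n-1-m)` times a triangular matrix of Dickson coefficients, whose diagonal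
carries the leading coefficients `1, …, 1` and the constant `D_0 = 2`. The projective Vandermonde
determinant is `∏_{i<j} (x_j (x_i^2 + 1) - x_i (x_j^2 + 1)) = ∏_{i<j} (x_i - x_j)(x_i x_j - 1)`.
-/

open Polynomial Finset Matrix

namespace Polynomial

variable {R : Type*} [CommRing R]

lemma natDegree_dickson_le (k : ℕ) (a : R) : ∀ n, (dickson k a n).natDegree ≤ n
  | 0 => by simpa [dickson_zero] using natDegree_sub_le (3 : R[X]) k
  | 1 => by simpa using natDegree_X_le
  | n + 2 => by
    rw [dickson_add_two]
    refine (natDegree_sub_le _ _).trans (max_le ?_ ?_)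
    · exact natDegree_mul_le.trans (by
        have := natDegree_dickson_le k a (n + 1); have := natDegree_X_le (R := R); omega)
    · exact (natDegree_C_mul_le _ _).trans ((natDegree_dickson_le k a n).trans (by omega))

lemma coeff_dickson_self (k : ℕ) (a : R) : ∀ {n}, n ≠ 0 → (dickson k a n).coeff n = 1
  | 1, _ => by simp
  | n + 2, _ => by
    rw [dickson_add_two, coeff_sub, coeff_X_mul, coeff_dickson_self k a n.succ_ne_zero, coeff_C_mul,
      coeff_eq_zero_of_natDegree_lt ((natDegree_dickson_le k a n).trans_lt (by omega)), mul_zero,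
      sub_zero]

lemma eval_homogenize_eq_sum (p : R[X]) (n : ℕ) (g : Fin 2 → R) :
    MvPolynomial.eval g (p.homogenize n) =
      ∑ m ∈ range (n + 1), p.coeff m * g 0 ^ m * g 1 ^ (n - m) := by
  simp only [homogenize, map_sum, MvPolynomial.eval_monomial,
    Finset.Nat.sum_antidiagonal_eq_sum_range_succ_mk]
  refine sum_congr rfl fun m _ => ?_
  simp [Finsupp.prod_fintype, mul_assoc]

lemma homogenize_add_eq_mul_pow {p : R[X]} {n : ℕ} (hp : p.natDegree ≤ n) (m : ℕ) :
    p.homogenize (n + m) = p.homogenize n * .X 1 ^ m := by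
  simpa using homogenize_mul p 1 hp (natDegree_one.trans_le m.zero_le)

lemma eval_homogenize_dickson_one (a : R) {u v w : R} (h : u * v = a * w ^ 2) :
    ∀ n, MvPolynomial.eval ![u + v, w] ((dickson 1 a n).homogenize n) = u ^ n + v ^ n
  | 0 => by
    rw [dickson_zero, ← C_ofNat, ← map_natCast C, ← C_sub, homogenize_C]
    norm_num
  | 1 => by simp [homogenize_X]
  | n + 2 => by
    have hX : (X * dickson 1 a (n + 1)).homogenize (n + 2) =
        X.homogenize 1 * (dickson 1 a (n + 1)).homogenize (n + 1) := by
      rw [← homogenize_mul _ _ natDegree_X_le (natDegree_dickson_le 1 a (n + 1)), add_comm 1]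
    have hC : (C a * dickson 1 a n).homogenize (n + 2) =
        (C a).homogenize 2 * (dickson 1 a n).homogenize n := by
      rw [← homogenize_mul _ _ ((natDegree_C a).trans_le (Nat.zero_le 2))
        (natDegree_dickson_le 1 a n), add_comm 2]
    rw [dickson_add_two, homogenize_sub, hX, hC, map_sub, map_mul, map_mul,
      eval_homogenize_dickson_one a h (n + 1), eval_homogenize_dickson_one a h n]
    simp only [homogenize_X one_ne_zero, homogenize_C, Nat.sub_self, pow_zero, mul_one, map_mul,
      map_pow, MvPolynomial.eval_X, MvPolynomial.eval_C, cons_val_zero, cons_val_one,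
      cons_val_fin_one]
    linear_combination (u ^ n + v ^ n) * h

end Polynomial

/-- Column `j` lists the coefficients of `D_{n-1-j}` in reverse order, to match the columns
`x^m (x^2 + 1)^(n-1-m)` of `projVandermonde x (x^2 + 1)`. -/
noncomputable def dicksonCoeffMatrix (R : Type*) [CommRing R] (n : ℕ) :
    Matrix (Fin n) (Fin n) R :=
  .of fun l j => (dickson 1 (1 : R) j.rev).coeff l.rev

section

variable {R : Type*} [CommRing R]

lemma dicksonCoeffMatrix_isLowerTriangular (n : ℕ) :
    (dicksonCoeffMatrix R n).IsLowerTriangular := by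
  intro l j (hlj : l < j)
  exact coeff_eq_zero_of_natDegree_lt
    ((natDegree_dickson_le 1 1 _).trans_lt (Fin.lt_def.mp (Fin.rev_lt_rev.mpr hlj)))

lemma det_dicksonCoeffMatrix (n : ℕ) : (dicksonCoeffMatrix R (n + 1)).det = 2 := by
  rw [det_of_isLowerTriangular _ (dicksonCoeffMatrix_isLowerTriangular _),
    ← Equiv.prod_comp Fin.revPerm, Fin.prod_univ_succ]
  simp only [dicksonCoeffMatrix, of_apply, Fin.revPerm_apply, Fin.rev_rev]
  rw [prod_eq_one fun l _ => coeff_dickson_self 1 1 (Fin.val_succ l ▸ l.val.succ_ne_zero)]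
  norm_num [dickson_zero]

lemma weylMatrix_eq_projVandermonde_mul (n : ℕ) (x : Fin (n + 1) → R) :
    Matrix.of (fun i j : Fin (n + 1) => x i ^ (j : ℕ) + x i ^ (2 * (n + 1) - (j : ℕ) - 2)) =
      projVandermonde x (fun i => x i ^ 2 + 1) * dicksonCoeffMatrix R (n + 1) := by
  ext i j
  have hentry : x i ^ (j : ℕ) + x i ^ (2 * (n + 1) - (j : ℕ) - 2) =
      MvPolynomial.eval ![x i ^ 2 + 1, x i] ((dickson 1 (1 : R) j.rev).homogenize n) := by
    have hn : n = j.rev + j := by rw [Fin.val_rev]; omega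
    have hpad := homogenize_add_eq_mul_pow (natDegree_dickson_le 1 (1 : R) j.rev) j
    rw [← hn] at hpad
    rw [hpad, map_mul, eval_homogenize_dickson_one (u := x i ^ 2) (v := 1) 1 (by ring)]
    simp only [map_pow, MvPolynomial.eval_X, cons_val_one, cons_val_fin_one, one_pow, ← pow_mul]
    rw [add_mul, one_mul, ← pow_add, add_comm]
    congr 2
    omega
  rw [of_apply, hentry, eval_homogenize_eq_sum, mul_apply, ← Fin.sum_univ_eq_sum_range,
    ← Equiv.sum_comp Fin.revPerm]
  refine sum_congr rfl fun l _ => ?_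
  simp only [projVandermonde_apply, dicksonCoeffMatrix, of_apply, Fin.revPerm_apply, Fin.val_rev,
    cons_val_zero, cons_val_one, cons_val_fin_one, Nat.add_sub_add_right,
    Nat.sub_sub_self (Fin.is_le l)]
  ring

end

/-- The `D_n` Weyl denominator formula, stated over a commutative ring in the form
`det = 2 ∏`.  Rows and columns of the matrix are indexed by `Fin n`, with the
`(i,j)`-entry (for 1-based indices) `x_i^{j-1} + x_i^{2n-j-1}`. -/
theorem weyl_denominator_D (R : Type*) [CommRing R] (n : ℕ) (hn : 1 ≤ n) (x : Fin n → R) :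
    Matrix.det (Matrix.of fun i j : Fin n => x i ^ (j : ℕ) + x i ^ (2 * n - (j : ℕ) - 2))
      = 2 * ∏ i : Fin n, ∏ j ∈ Finset.Ioi i, ((x i - x j) * (x i * x j - 1)) := by
  obtain ⟨n, rfl⟩ := Nat.exists_eq_add_of_le' hn
  rw [weylMatrix_eq_projVandermonde_mul, det_mul, det_projVandermonde, det_dicksonCoeffMatrix,
    mul_comm]
  congr 1
  exact prod_congr rfl fun i _ => prod_congr rfl fun j _ => by ring
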